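/- The hypergraph (Q, S) has a 2-colouring if and only if the graph G' contains C_6 as a contraction. -/

import Mathlib

/-- `W` is an `H`-witness structure of `G`: a family of pairwise disjoint nonempty
connected subsets of `V(G)` covering `V(G)` such that distinct `h₁ h₂` are adjacent in `H`
iff there is an edge of `G` between `W h₁` and `W h₂`. -/
def IsWitnessStructure {V U : Type*} (G : SimpleGraph V) (H : SimpleGraph U)
    (W : U → Set V) : Prop :=
  (∀ h, (W h).Nonempty) ∧
  (∀ h₁ h₂, h₁ ≠ h₂ → Disjoint (W h₁) (W h₂)) ∧
  (⋃ h, W h) = Set.univ ∧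
  (∀ h, (G.induce (W h)).Connected) ∧
  (∀ h₁ h₂, h₁ ≠ h₂ → ((∃ a ∈ W h₁, ∃ b ∈ W h₂, G.Adj a b) ↔ H.Adj h₁ h₂))

/-- `G` contains `H` as a contraction. -/
def ContainsAsContraction {V U : Type*} (G : SimpleGraph V) (H : SimpleGraph U) : Prop :=
  ∃ W : U → Set V, IsWitnessStructure G H W

/-- Raw vertex names for the graph `G'`: `G(Q,S)` with `q*` and `u₂` deleted and a new
vertex `x` added (adjacent to `v` and `w`). -/
inductive HVertex' (m n : ℕ) : Type
  | elt : Fin m → HVertex' m n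
  | hyp : Fin n → HVertex' m n
  | copy : Fin n → HVertex' m n
  | sub : Fin m → Fin n → HVertex' m n
  | u1 : HVertex' m n
  | x : HVertex' m n
  | v : HVertex' m n
  | w : HVertex' m n

/-- A raw vertex name is an actual vertex of `G'`: the subdivision vertex `q^i_j`
exists only when `q_i ∈ S_j`. -/
def HVertex'.OK {m n : ℕ} (S : Fin n → Set (Fin m)) : HVertex' m n → Prop
  | .sub i j => i ∈ S j
  | _ => True

/-- The vertex set of `G'`. -/
def GVertex' {m n : ℕ} (S : Fin n → Set (Fin m)) : Type := {y : HVertex' m n // y.OK S}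

/-- The (asymmetrically listed) edges of `G'`:
`q^i_j q_i`, `q^i_j S_j`, `q_i S_j'` (for `q_i ∈ S_j`), `S_j S_k'` (all `j,k`),
`u₁ S_j`, `u₁ v`, `x v`, `x w`, `w S_j'`. -/
def baseAdj' {m n : ℕ} (S : Fin n → Set (Fin m)) : HVertex' m n → HVertex' m n → Prop
  | .sub i _, .elt i' => i = i'
  | .sub _ j, .hyp j' => j = j'
  | .elt i, .copy j => i ∈ S j
  | .hyp _, .copy _ => True
  | .u1, .hyp _ => True
  | .u1, .v => True
  | .x, .v => True
  | .x, .w => True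
  | .w, .copy _ => True
  | _, _ => False

/-- The graph `G'`. -/
def GQS' {m n : ℕ} (S : Fin n → Set (Fin m)) : SimpleGraph (GVertex' S) :=
  SimpleGraph.fromRel (fun a b => baseAdj' S a.1 b.1)

/-- `(Q₁, Q₂)` is a 2-colouring of the hypergraph `(Q, S)`: a partition of `Q` such that
every hyperedge meets both parts. -/
def IsTwoColouring {m n : ℕ} (S : Fin n → Set (Fin m)) (Q₁ Q₂ : Set (Fin m)) : Prop :=
  Q₁ ∪ Q₂ = Set.univ ∧ Disjoint Q₁ Q₂ ∧ ∀ j, (Q₁ ∩ S j).Nonempty ∧ (Q₂ ∩ S j).Nonempty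

/-! A 2-colouring `(Q₁, Q₂)` yields the contraction onto `C₆` whose bags, in cyclic order, are
`{v}`, `{u₁}`, `S ∪ Q' ∪ Q₁`, `S' ∪ Q₂`, `{w}`, `{x}`.

Conversely, encode a contraction as a map `f` onto `C₆` with connected fibres. Since `S_n = Q`,
every vertex other than `v` lies within distance 2 of `S_n'`, so the bag antipodal to that of
`S_n'` is `{v}`, and `x`, a neighbour of `v`, lies next to it. After a symmetry of `C₆`,
`f S_n' = 0` and `f x = 4`; the adjacencies then force `f u₁ = 2`, `f w = 5`, `f S_j = 1`,
`f S_j' = 0` and `f q_i ∈ {0, 1}`. Connectivity of the bag `1` (resp. `0`) makes every `S_j`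
(resp. `S_j'`) reach a `q_i ∈ S_j` in that bag, so the elements sent to `1` and to `0` form a
2-colouring. -/

open SimpleGraph

namespace SimpleGraph

variable {V : Type*} {G : SimpleGraph V}

theorem Preconnected.exists_adj_mem_notMem (hG : G.Preconnected) {P : Set V} {a b : V}
    (ha : a ∈ P) (hb : b ∉ P) : ∃ x y, G.Adj x y ∧ x ∈ P ∧ y ∉ P := by
  obtain ⟨p⟩ := hG a b
  obtain ⟨d, -, hd⟩ := p.exists_boundary_dart P ha hb
  exact ⟨_, _, d.adj, hd⟩

theorem induce_connected_of_walks {s : Set V} {u : V} (hu : u ∈ s)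
    (hwalk : ∀ v ∈ s, ∃ p : G.Walk u v, ∀ x ∈ p.support, x ∈ s) : (G.induce s).Connected :=
  G.induce_connected_of_patches u hu fun hv => by
    obtain ⟨p, hp⟩ := hwalk _ hv
    exact ⟨_, hp, p.start_mem_support, p.end_mem_support,
      p.connected_induce_support.preconnected _ _⟩

def cycleGraphSubRight {n : ℕ} (t : Fin (n + 2)) : cycleGraph (n + 2) ≃g cycleGraph (n + 2) where
  toEquiv := Equiv.subRight t
  map_rel_iff' := by simp [cycleGraph_adj, sub_sub_sub_cancel_right]

def cycleGraphSubLeft {n : ℕ} (t : Fin (n + 2)) : cycleGraph (n + 2) ≃g cycleGraph (n + 2) where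
  toEquiv := Equiv.subLeft t
  map_rel_iff' := by simp [cycleGraph_adj, sub_sub_sub_cancel_left, or_comm]

end SimpleGraph

section ContractionMap

variable {V U U' : Type*} {G : SimpleGraph V} {H : SimpleGraph U} {H' : SimpleGraph U'}
  {f : V → U}

structure IsContractionMap (G : SimpleGraph V) (H : SimpleGraph U) (f : V → U) : Prop where
  surjective : Function.Surjective f
  connected_fiber : ∀ h, (G.induce (f ⁻¹' {h})).Connected
  adj_of_adj : ∀ ⦃a b⦄, G.Adj a b → f a ≠ f b → H.Adj (f a) (f b)
  exists_adj : ∀ ⦃h₁ h₂⦄, H.Adj h₁ h₂ → ∃ a b, G.Adj a b ∧ f a = h₁ ∧ f b = h₂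

namespace IsContractionMap

theorem isWitnessStructure (hf : IsContractionMap G H f) :
    IsWitnessStructure G H (fun h => f ⁻¹' {h}) := by
  refine ⟨hf.surjective, fun h₁ h₂ hne => ?_, ?_, hf.connected_fiber, fun h₁ h₂ hne => ?_⟩
  · exact Set.disjoint_singleton.mpr hne |>.preimage f
  · exact Set.iUnion_eq_univ_iff.mpr fun a => ⟨f a, rfl⟩
  · constructor
    · rintro ⟨a, rfl, b, rfl, hab⟩
      exact hf.adj_of_adj hab hne
    · intro h
      obtain ⟨a, b, hab, rfl, rfl⟩ := hf.exists_adj h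
      exact ⟨a, rfl, b, rfl, hab⟩

theorem eq_or_adj (hf : IsContractionMap G H f) {a b : V} (hab : G.Adj a b) :
    f a = f b ∨ H.Adj (f a) (f b) :=
  or_iff_not_imp_left.mpr (hf.adj_of_adj hab)

theorem iso_comp (hf : IsContractionMap G H f) (σ : H ≃g H') : IsContractionMap G H' (σ ∘ f) where
  surjective := σ.surjective.comp hf.surjective
  connected_fiber h := by
    have : σ ∘ f ⁻¹' {h} = f ⁻¹' {σ.symm h} := by ext; exact σ.eq_symm_apply.symm
    rw [this]
    exact hf.connected_fiber (σ.symm h)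
  adj_of_adj a b hab hne := σ.map_adj_iff.mpr (hf.adj_of_adj hab fun h => hne (by simp [h]))
  exists_adj h₁ h₂ h := by
    obtain ⟨a, b, hab, ha, hb⟩ := hf.exists_adj (σ.symm.map_adj_iff.mpr h)
    exact ⟨a, b, hab, by simp [ha], by simp [hb]⟩

theorem exists_adj_mem_notMem (hf : IsContractionMap G H f) {P : Set V} {a b : V} (ha : a ∈ P)
    (hb : b ∉ P) (hab : f a = f b) :
    ∃ x y, G.Adj x y ∧ x ∈ P ∧ y ∉ P ∧ f x = f a ∧ f y = f a := by
  obtain ⟨⟨x, hx⟩, ⟨y, hy⟩, hxy, hxP, hyP⟩ :=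
    (hf.connected_fiber (f a)).preconnected.exists_adj_mem_notMem
      (P := {z | z.1 ∈ P}) (a := ⟨a, rfl⟩) (b := ⟨b, hab.symm⟩) ha hb
  exact ⟨x, y, hxy, hxP, hyP, hx, hy⟩

end IsContractionMap

theorem IsWitnessStructure.exists_isContractionMap {W : U → Set V}
    (hW : IsWitnessStructure G H W) : ∃ f : V → U, IsContractionMap G H f := by
  obtain ⟨hne, hdisj, hcover, hconn, hadj⟩ := hW
  have hmem : ∀ a, ∃ h, a ∈ W h := fun a => Set.mem_iUnion.mp (hcover ▸ Set.mem_univ a)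
  choose f hf using hmem
  have hfiber : ∀ a h, f a = h ↔ a ∈ W h := fun a h => by
    refine ⟨fun ha => ha ▸ hf a, fun ha => ?_⟩
    by_contra hne'
    exact Set.disjoint_left.mp (hdisj _ _ hne') (hf a) ha
  refine ⟨f, fun h => ?_, fun h => ?_, fun a b hab hne' => ?_, fun h₁ h₂ h => ?_⟩
  · obtain ⟨a, ha⟩ := hne h
    exact ⟨a, (hfiber a h).mpr ha⟩
  · rw [show f ⁻¹' {h} = W h from Set.ext fun a => hfiber a h]
    exact hconn h
  · exact (hadj _ _ hne').mp ⟨a, hf a, b, hf b, hab⟩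
  · obtain ⟨a, ha, b, hb, hab⟩ := (hadj _ _ h.ne).mpr h
    exact ⟨a, b, hab, (hfiber a h₁).mpr ha, (hfiber b h₂).mpr hb⟩

theorem containsAsContraction_iff_exists_isContractionMap :
    ContainsAsContraction G H ↔ ∃ f : V → U, IsContractionMap G H f :=
  ⟨fun ⟨_, hW⟩ => hW.exists_isContractionMap, fun ⟨_, hf⟩ => ⟨_, hf.isWitnessStructure⟩⟩

theorem exists_adj_of_cycleGraph_adj {n : ℕ} {f : V → Fin (n + 2)}
    (h : ∀ k, ∃ a b, G.Adj a b ∧ f a = k ∧ f b = k + 1) ⦃h₁ h₂ : Fin (n + 2)⦄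
    (hadj : (cycleGraph (n + 2)).Adj h₁ h₂) : ∃ a b, G.Adj a b ∧ f a = h₁ ∧ f b = h₂ := by
  rcases cycleGraph_adj.mp hadj with h' | h'
  · obtain ⟨a, b, hab, ha, hb⟩ := h h₂
    exact ⟨b, a, hab.symm, by rw [hb, ← h', add_sub_cancel], ha⟩
  · obtain ⟨a, b, hab, ha, hb⟩ := h h₁
    exact ⟨a, b, hab, ha, by rw [hb, ← h', add_sub_cancel]⟩

end ContractionMap

namespace GVertex'

variable {m n : ℕ} {S : Fin n → Set (Fin m)}

def elt (i : Fin m) : GVertex' S := ⟨.elt i, trivial⟩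
def hyp (j : Fin n) : GVertex' S := ⟨.hyp j, trivial⟩
def copy (j : Fin n) : GVertex' S := ⟨.copy j, trivial⟩
def sub {i : Fin m} {j : Fin n} (h : i ∈ S j) : GVertex' S := ⟨.sub i j, h⟩
def u1 : GVertex' S := ⟨.u1, trivial⟩
def x : GVertex' S := ⟨.x, trivial⟩
def v : GVertex' S := ⟨.v, trivial⟩
def w : GVertex' S := ⟨.w, trivial⟩

theorem ext_iff {a b : GVertex' S} : a = b ↔ a.1 = b.1 := Subtype.ext_iff

@[elab_as_elim]
theorem induction_on {motive : GVertex' S → Prop} (z : GVertex' S)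
    (elt : ∀ i, motive (elt i)) (hyp : ∀ j, motive (hyp j)) (copy : ∀ j, motive (copy j))
    (sub : ∀ i j (h : i ∈ S j), motive (sub h)) (u1 : motive u1) (x : motive x) (v : motive v)
    (w : motive w) : motive z := by
  obtain ⟨y, hy⟩ := z
  cases y
  exacts [elt _, hyp _, copy _, sub _ _ hy, u1, x, v, w]

@[simp] theorem val_elt (i : Fin m) : (elt i : GVertex' S).1 = .elt i := rfl
@[simp] theorem val_hyp (j : Fin n) : (hyp j : GVertex' S).1 = .hyp j := rfl
@[simp] theorem val_copy (j : Fin n) : (copy j : GVertex' S).1 = .copy j := rfl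
@[simp] theorem val_sub {i : Fin m} {j : Fin n} (h : i ∈ S j) : (sub h).1 = .sub i j := rfl
@[simp] theorem val_u1 : (u1 : GVertex' S).1 = .u1 := rfl
@[simp] theorem val_x : (x : GVertex' S).1 = .x := rfl
@[simp] theorem val_v : (v : GVertex' S).1 = .v := rfl
@[simp] theorem val_w : (w : GVertex' S).1 = .w := rfl

end GVertex'

namespace GQS'

variable {m n : ℕ} {S : Fin n → Set (Fin m)}

theorem sub_adj_elt {i : Fin m} {j : Fin n} (h : i ∈ S j) : (GQS' S).Adj (.sub h) (.elt i) :=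
  ⟨by rintro ⟨⟩, Or.inl rfl⟩
theorem sub_adj_hyp {i : Fin m} {j : Fin n} (h : i ∈ S j) : (GQS' S).Adj (.sub h) (.hyp j) :=
  ⟨by rintro ⟨⟩, Or.inl rfl⟩
theorem elt_adj_copy {i : Fin m} {j : Fin n} (h : i ∈ S j) : (GQS' S).Adj (.elt i) (.copy j) :=
  ⟨by rintro ⟨⟩, Or.inl h⟩
theorem hyp_adj_copy (j k : Fin n) : (GQS' S).Adj (.hyp j) (.copy k) :=
  ⟨by rintro ⟨⟩, Or.inl trivial⟩
theorem u1_adj_hyp (j : Fin n) : (GQS' S).Adj .u1 (.hyp j) := ⟨by rintro ⟨⟩, Or.inl trivial⟩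
theorem u1_adj_v : (GQS' S).Adj .u1 .v := ⟨by rintro ⟨⟩, Or.inl trivial⟩
theorem x_adj_v : (GQS' S).Adj .x .v := ⟨by rintro ⟨⟩, Or.inl trivial⟩
theorem x_adj_w : (GQS' S).Adj .x .w := ⟨by rintro ⟨⟩, Or.inl trivial⟩
theorem w_adj_copy (j : Fin n) : (GQS' S).Adj .w (.copy j) := ⟨by rintro ⟨⟩, Or.inl trivial⟩

theorem adj_v_cases {a : GVertex' S} (h : (GQS' S).Adj a .v) : a = .u1 ∨ a = .x := by
  simp only [GVertex'.ext_iff]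
  obtain ⟨y, hy⟩ := a
  obtain ⟨-, h | h⟩ := h <;> revert hy <;> cases y <;> aesop (add norm simp [baseAdj', HVertex'.OK])

theorem adj_copy_cases {a : GVertex' S} {k : Fin n} (h : (GQS' S).Adj a (.copy k)) :
    (∃ i, ∃ _ : i ∈ S k, a = .elt i) ∨ (∃ j, a = .hyp j) ∨ a = .w := by
  simp only [GVertex'.ext_iff]
  obtain ⟨y, hy⟩ := a
  obtain ⟨-, h | h⟩ := h <;> revert hy <;> cases y <;> aesop (add norm simp [baseAdj', HVertex'.OK])

theorem adj_hyp_cases {a : GVertex' S} {j : Fin n} (h : (GQS' S).Adj a (.hyp j)) :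
    a = .u1 ∨ (∃ k, a = .copy k) ∨ ∃ i, ∃ h : i ∈ S j, a = .sub h := by
  simp only [GVertex'.ext_iff]
  obtain ⟨y, hy⟩ := a
  obtain ⟨-, h | h⟩ := h <;> revert hy <;> cases y <;> aesop (add norm simp [baseAdj', HVertex'.OK])

theorem adj_sub_cases {a : GVertex' S} {i : Fin m} {j : Fin n} {hij : i ∈ S j}
    (h : (GQS' S).Adj a (.sub hij)) : a = .hyp j ∨ a = .elt i := by
  simp only [GVertex'.ext_iff]
  obtain ⟨y, hy⟩ := a
  obtain ⟨-, h | h⟩ := h <;> revert hy <;> cases y <;> aesop (add norm simp [baseAdj', HVertex'.OK])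

theorem adj_elt_cases {a : GVertex' S} {i : Fin m} (h : (GQS' S).Adj a (.elt i)) :
    (∃ k, a = .copy k) ∨ ∃ j, ∃ h : i ∈ S j, a = .sub h := by
  simp only [GVertex'.ext_iff]
  obtain ⟨y, hy⟩ := a
  obtain ⟨-, h | h⟩ := h <;> revert hy <;> cases y <;> aesop (add norm simp [baseAdj', HVertex'.OK])

end GQS'

theorem IsTwoColouring.compl {m n : ℕ} {S : Fin n → Set (Fin m)} {Q₁ Q₂ : Set (Fin m)}
    (h : IsTwoColouring S Q₁ Q₂) : IsTwoColouring S Q₁ Q₁ᶜ := by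
  obtain ⟨-, hdisj, hmeet⟩ := h
  refine ⟨Set.union_compl_self Q₁, disjoint_compl_right, fun j => ⟨(hmeet j).1, ?_⟩⟩
  obtain ⟨i, hi₂, hij⟩ := (hmeet j).2
  exact ⟨i, hdisj.subset_compl_left hi₂, hij⟩

section Forward

variable {m n : ℕ} {S : Fin n → Set (Fin m)} {l : Fin n} {Q₁ : Set (Fin m)}

open Classical in
noncomputable def colourBag (Q₁ : Set (Fin m)) (z : GVertex' S) : Fin 6 :=
  match z.1 with
  | .v => 0
  | .u1 => 1
  | .hyp _ | .sub _ _ => 2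
  | .elt i => if i ∈ Q₁ then 2 else 3
  | .copy _ => 3
  | .w => 4
  | .x => 5

@[simp] theorem colourBag_v : colourBag (S := S) Q₁ .v = 0 := rfl
@[simp] theorem colourBag_u1 : colourBag (S := S) Q₁ .u1 = 1 := rfl
@[simp] theorem colourBag_hyp (j : Fin n) : colourBag (S := S) Q₁ (.hyp j) = 2 := rfl
@[simp] theorem colourBag_sub {i : Fin m} {j : Fin n} (h : i ∈ S j) :
    colourBag Q₁ (.sub h) = 2 := rfl
open Classical in
@[simp] theorem colourBag_elt (i : Fin m) :
    colourBag (S := S) Q₁ (.elt i) = if i ∈ Q₁ then 2 else 3 := rfl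
@[simp] theorem colourBag_copy (j : Fin n) : colourBag (S := S) Q₁ (.copy j) = 3 := rfl
@[simp] theorem colourBag_w : colourBag (S := S) Q₁ .w = 4 := rfl
@[simp] theorem colourBag_x : colourBag (S := S) Q₁ .x = 5 := rfl

def bagCentre (l : Fin n) : Fin 6 → GVertex' S := ![.v, .u1, .hyp l, .copy l, .w, .x]

@[simp] theorem bagCentre_zero : bagCentre (S := S) l 0 = .v := rfl
@[simp] theorem bagCentre_one : bagCentre (S := S) l 1 = .u1 := rfl
@[simp] theorem bagCentre_two : bagCentre (S := S) l 2 = .hyp l := rfl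
@[simp] theorem bagCentre_three : bagCentre (S := S) l 3 = .copy l := rfl
@[simp] theorem bagCentre_four : bagCentre (S := S) l 4 = .w := rfl
@[simp] theorem bagCentre_five : bagCentre (S := S) l 5 = .x := rfl

theorem colourBag_bagCentre (k : Fin 6) : colourBag Q₁ (bagCentre (S := S) l k) = k := by
  fin_cases k <;> rfl

theorem adj_bagCentre_add_one (k : Fin 6) :
    (GQS' S).Adj (bagCentre l k) (bagCentre l (k + 1)) := by
  fin_cases k
  exacts [GQS'.u1_adj_v.symm, GQS'.u1_adj_hyp l, GQS'.hyp_adj_copy l l,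
    (GQS'.w_adj_copy l).symm, GQS'.x_adj_w.symm, GQS'.x_adj_v]

theorem colourBag_eq_or_adj_of_baseAdj {a b : GVertex' S} (h : baseAdj' S a.1 b.1) :
    colourBag Q₁ a = colourBag Q₁ b ∨ (cycleGraph 6).Adj (colourBag Q₁ a) (colourBag Q₁ b) := by
  induction a using GVertex'.induction_on <;> induction b using GVertex'.induction_on <;>
    simp only [GVertex'.val_elt, GVertex'.val_hyp, GVertex'.val_copy, GVertex'.val_sub,
      GVertex'.val_u1, GVertex'.val_x, GVertex'.val_v, GVertex'.val_w, baseAdj'] at h <;>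
    simp only [colourBag_v, colourBag_u1, colourBag_hyp, colourBag_sub, colourBag_elt,
      colourBag_copy, colourBag_w, colourBag_x] <;>
    first | decide | split_ifs <;> decide

theorem colourBag_eq_or_adj {a b : GVertex' S} (hab : (GQS' S).Adj a b) :
    colourBag Q₁ a = colourBag Q₁ b ∨ (cycleGraph 6).Adj (colourBag Q₁ a) (colourBag Q₁ b) :=
  hab.2.elim colourBag_eq_or_adj_of_baseAdj
    fun h => (colourBag_eq_or_adj_of_baseAdj h).imp Eq.symm Adj.symm

theorem exists_walk_hyp_hyp (hl : S l = Set.univ) (hQ : IsTwoColouring S Q₁ Q₁ᶜ) (j : Fin n) :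
    ∃ p : (GQS' S).Walk (.hyp l) (.hyp j), ∀ y ∈ p.support, colourBag Q₁ y = 2 := by
  obtain ⟨i, hi, hij⟩ := (hQ.2.2 j).1
  have hil : i ∈ S l := hl ▸ Set.mem_univ i
  refine ⟨.cons (GQS'.sub_adj_hyp hil).symm <| .cons (GQS'.sub_adj_elt hil) <|
    .cons (GQS'.sub_adj_elt hij).symm <| .cons (GQS'.sub_adj_hyp hij) .nil, ?_⟩
  simp [hi]

theorem exists_walk_bagCentre (hl : S l = Set.univ) (hQ : IsTwoColouring S Q₁ Q₁ᶜ)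
    (z : GVertex' S) : ∃ p : (GQS' S).Walk (bagCentre l (colourBag Q₁ z)) z,
      ∀ y ∈ p.support, colourBag Q₁ y = colourBag Q₁ z := by
  have hmem (i : Fin m) : i ∈ S l := hl ▸ Set.mem_univ i
  induction z using GVertex'.induction_on with
  | hyp j => exact exists_walk_hyp_hyp hl hQ j
  | sub i j hij =>
    rw [colourBag_sub, bagCentre_two]
    obtain ⟨p, hp⟩ := exists_walk_hyp_hyp hl hQ j
    refine ⟨p.concat (GQS'.sub_adj_hyp hij).symm, fun y hy => ?_⟩
    simp only [Walk.support_concat, List.mem_append,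
      List.mem_singleton] at hy
    rcases hy with hy | rfl
    exacts [hp y hy, rfl]
  | elt i =>
    by_cases hi : i ∈ Q₁
    · rw [colourBag_elt, if_pos hi, bagCentre_two]
      refine ⟨.cons (GQS'.sub_adj_hyp (hmem i)).symm <| .cons (GQS'.sub_adj_elt (hmem i)) .nil, ?_⟩
      simp [hi]
    · rw [colourBag_elt, if_neg hi, bagCentre_three]
      exact ⟨.cons (GQS'.elt_adj_copy (hmem i)).symm .nil, by simp [hi]⟩
  | copy k =>
    rw [colourBag_copy, bagCentre_three]
    obtain ⟨i, hi, hik⟩ := (hQ.2.2 k).2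
    refine ⟨.cons (GQS'.elt_adj_copy (hmem i)).symm <| .cons (GQS'.elt_adj_copy hik) .nil, ?_⟩
    simp_all
  | u1 => exact ⟨.nil, by simp⟩
  | x => exact ⟨.nil, by simp⟩
  | v => exact ⟨.nil, by simp⟩
  | w => exact ⟨.nil, by simp⟩

theorem isContractionMap_colourBag (hl : S l = Set.univ) (hQ : IsTwoColouring S Q₁ Q₁ᶜ) :
    IsContractionMap (GQS' S) (cycleGraph 6) (colourBag Q₁) where
  surjective k := ⟨bagCentre l k, colourBag_bagCentre k⟩
  connected_fiber k := induce_connected_of_walks (colourBag_bagCentre (l := l) k) fun z hz => by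
    subst hz
    exact exists_walk_bagCentre hl hQ z
  adj_of_adj _ _ hab hne := (colourBag_eq_or_adj hab).resolve_left hne
  exists_adj := exists_adj_of_cycleGraph_adj fun k =>
    ⟨_, _, adj_bagCentre_add_one (l := l) k, colourBag_bagCentre k, colourBag_bagCentre (k + 1)⟩

end Forward

namespace GQS'

variable {m n : ℕ} {S : Fin n → Set (Fin m)} {l : Fin n}

theorem eq_copy_or_adj_or_exists_adj_adj (hl : S l = Set.univ) {z : GVertex' S} (hz : z ≠ .v) :
    z = .copy l ∨ (GQS' S).Adj (.copy l) z ∨ ∃ y, (GQS' S).Adj (.copy l) y ∧ (GQS' S).Adj y z := by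
  have hmem (i : Fin m) : i ∈ S l := hl ▸ Set.mem_univ i
  induction z using GVertex'.induction_on with
  | elt i => exact .inr <| .inl (elt_adj_copy (hmem i)).symm
  | hyp j => exact .inr <| .inl (hyp_adj_copy j l).symm
  | copy k => exact .inr <| .inr ⟨.hyp l, (hyp_adj_copy l l).symm, hyp_adj_copy l k⟩
  | sub i j hij => exact .inr <| .inr ⟨.hyp j, (hyp_adj_copy j l).symm, (sub_adj_hyp hij).symm⟩
  | u1 => exact .inr <| .inr ⟨.hyp l, (hyp_adj_copy l l).symm, (u1_adj_hyp l).symm⟩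
  | x => exact .inr <| .inr ⟨.w, (w_adj_copy l).symm, x_adj_w.symm⟩
  | v => exact absurd rfl hz
  | w => exact .inr <| .inl (w_adj_copy l).symm

variable {f : GVertex' S → Fin 6}

theorem eq_v_of_map_eq_add_three (hf : IsContractionMap (GQS' S) (cycleGraph 6) f)
    (hl : S l = Set.univ) {z : GVertex' S} (hz : f z = f (.copy l) + 3) : z = .v := by
  by_contra hzv
  have key : ∀ t a b : Fin 6, (t = a ∨ (cycleGraph 6).Adj t a) →
      (a = b ∨ (cycleGraph 6).Adj a b) → b ≠ t + 3 := by decide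
  rcases eq_copy_or_adj_or_exists_adj_adj hl hzv with rfl | h | ⟨y, h₁, h₂⟩
  · exact key _ _ _ (.inl rfl) (.inl rfl) hz
  · exact key _ _ _ (.inl rfl) (hf.eq_or_adj h) hz
  · exact key _ _ _ (hf.eq_or_adj h₁) (hf.eq_or_adj h₂) hz

theorem map_v (hf : IsContractionMap (GQS' S) (cycleGraph 6) f) (hl : S l = Set.univ) :
    f .v = f (.copy l) + 3 := by
  obtain ⟨z, hz⟩ := hf.surjective (f (.copy l) + 3)
  rwa [← eq_v_of_map_eq_add_three hf hl hz]

theorem map_x (hf : IsContractionMap (GQS' S) (cycleGraph 6) f) (hl : S l = Set.univ) :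
    f .x = f (.copy l) + 2 ∨ f .x = f (.copy l) + 4 := by
  have hne : f .x ≠ f (.copy l) + 3 := fun h => x_adj_v.ne (eq_v_of_map_eq_add_three hf hl h)
  have hadj := hf.eq_or_adj x_adj_v
  rw [map_v hf hl] at hadj
  generalize f .x = a at hne hadj ⊢
  generalize f (.copy l) = t at hne hadj ⊢
  revert a t
  decide

end GQS'

namespace GQS'

variable {m n : ℕ} {S : Fin n → Set (Fin m)} {l : Fin n} {f : GVertex' S → Fin 6}

theorem map_u1_eq_two (hf : IsContractionMap (GQS' S) (cycleGraph 6) f) (hl : S l = Set.univ)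
    (h0 : f (.copy l) = 0) (h4 : f .x = 4) : f .u1 = 2 := by
  obtain ⟨a, b, hab, ha, hb⟩ := hf.exists_adj (show (cycleGraph 6).Adj 2 3 by decide)
  obtain rfl : b = .v := eq_v_of_map_eq_add_three hf hl (by rw [hb, h0]; rfl)
  rcases adj_v_cases hab with rfl | rfl
  · exact ha
  · exact absurd (h4.symm.trans ha) (by decide)

theorem map_w_eq_five (hf : IsContractionMap (GQS' S) (cycleGraph 6) f)
    (h0 : f (.copy l) = 0) (h4 : f .x = 4) : f .w = 5 := by
  have h₁ := hf.eq_or_adj x_adj_w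
  have h₂ := hf.eq_or_adj (w_adj_copy l)
  rw [h4] at h₁
  rw [h0] at h₂
  generalize f .w = a at h₁ h₂ ⊢
  revert a
  decide

theorem map_hyp_eq_one (hf : IsContractionMap (GQS' S) (cycleGraph 6) f) (hl : S l = Set.univ)
    (h0 : f (.copy l) = 0) (h4 : f .x = 4) (j : Fin n) : f (.hyp j) = 1 := by
  have h₁ := hf.eq_or_adj (u1_adj_hyp j)
  have h₂ := hf.eq_or_adj (hyp_adj_copy j l)
  rw [map_u1_eq_two hf hl h0 h4] at h₁
  rw [h0] at h₂
  generalize f (.hyp j) = a at h₁ h₂ ⊢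
  revert a
  decide

theorem map_copy_eq_zero (hf : IsContractionMap (GQS' S) (cycleGraph 6) f) (hl : S l = Set.univ)
    (h0 : f (.copy l) = 0) (h4 : f .x = 4) (k : Fin n) : f (.copy k) = 0 := by
  have h₁ := hf.eq_or_adj (hyp_adj_copy l k)
  have h₂ := hf.eq_or_adj (w_adj_copy k)
  rw [map_hyp_eq_one hf hl h0 h4] at h₁
  rw [map_w_eq_five hf h0 h4] at h₂
  generalize f (.copy k) = a at h₁ h₂ ⊢
  revert a
  decide

theorem map_sub_ne_five (hf : IsContractionMap (GQS' S) (cycleGraph 6) f) (hl : S l = Set.univ)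
    (h0 : f (.copy l) = 0) (h4 : f .x = 4) {i : Fin m} {j : Fin n} (hij : i ∈ S j) :
    f (.sub hij) ≠ 5 := by
  have h₁ := hf.eq_or_adj (sub_adj_hyp hij)
  rw [map_hyp_eq_one hf hl h0 h4] at h₁
  generalize f (.sub hij) = a at h₁ ⊢
  revert a
  decide

theorem map_elt_eq_zero_or_one (hf : IsContractionMap (GQS' S) (cycleGraph 6) f)
    (hl : S l = Set.univ) (h0 : f (.copy l) = 0) (h4 : f .x = 4) (i : Fin m) :
    f (.elt i) = 0 ∨ f (.elt i) = 1 := by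
  have h₁ := hf.eq_or_adj (elt_adj_copy (hl ▸ Set.mem_univ i : i ∈ S l))
  rw [h0] at h₁
  have h₅ : f (.elt i) ≠ 5 := by
    intro h₅
    obtain ⟨a, b, hab, rfl, hb, -, hfb⟩ := hf.exists_adj_mem_notMem (P := {.elt i})
      (b := .w) rfl (by rintro ⟨⟩) (by rw [h₅, map_w_eq_five hf h0 h4])
    rcases adj_elt_cases hab.symm with ⟨k, rfl⟩ | ⟨j, hij, rfl⟩
    · exact absurd (hfb.symm.trans (map_copy_eq_zero hf hl h0 h4 k)) (by rw [h₅]; decide)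
    · exact map_sub_ne_five hf hl h0 h4 hij (hfb.trans h₅)
  generalize f (.elt i) = a at h₁ h₅ ⊢
  revert a
  decide

end GQS'

namespace GQS'

variable {m n : ℕ} {S : Fin n → Set (Fin m)} {l : Fin n} {f : GVertex' S → Fin 6}

theorem exists_mem_map_elt_eq_one (hn : 2 ≤ n) (hf : IsContractionMap (GQS' S) (cycleGraph 6) f)
    (hl : S l = Set.univ) (h0 : f (.copy l) = 0) (h4 : f .x = 4) (j : Fin n) :
    ∃ i ∈ S j, f (.elt i) = 1 := by
  have : Nontrivial (Fin n) := Fin.nontrivial_iff_two_le.mpr hn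
  obtain ⟨j', hj'⟩ := exists_ne j
  by_contra! hnone
  have hhyp := map_hyp_eq_one hf hl h0 h4
  obtain ⟨a, b, hab, ha, hb, -, hfb⟩ := hf.exists_adj_mem_notMem
    (P := {z | z = .hyp j ∨ ∃ i, ∃ hij : i ∈ S j, z = .sub hij}) (b := .hyp j') (.inl rfl)
    (by rintro (h | ⟨i, hij, h⟩) <;> cases h; exact hj' rfl) (by rw [hhyp, hhyp])
  rw [hhyp] at hfb
  rcases ha with rfl | ⟨i, hij, rfl⟩
  · rcases adj_hyp_cases hab.symm with rfl | ⟨k, rfl⟩ | ⟨i, hij, rfl⟩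
    · exact absurd (hfb.symm.trans (map_u1_eq_two hf hl h0 h4)) (by decide)
    · exact absurd (hfb.symm.trans (map_copy_eq_zero hf hl h0 h4 k)) (by decide)
    · exact hb (.inr ⟨i, hij, rfl⟩)
  · rcases adj_sub_cases hab.symm with rfl | rfl
    · exact hb (.inl rfl)
    · exact hnone i hij hfb

theorem exists_mem_map_elt_eq_zero (hn : 2 ≤ n) (hf : IsContractionMap (GQS' S) (cycleGraph 6) f)
    (hl : S l = Set.univ) (h0 : f (.copy l) = 0) (h4 : f .x = 4) (j : Fin n) :
    ∃ i ∈ S j, f (.elt i) = 0 := by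
  have : Nontrivial (Fin n) := Fin.nontrivial_iff_two_le.mpr hn
  obtain ⟨j', hj'⟩ := exists_ne j
  have hcopy := map_copy_eq_zero hf hl h0 h4
  obtain ⟨a, b, hab, rfl, hb, -, hfb⟩ := hf.exists_adj_mem_notMem (P := {.copy j})
    (b := .copy j') rfl (by rintro ⟨⟩; exact hj' rfl) (by rw [hcopy, hcopy])
  rw [hcopy] at hfb
  rcases adj_copy_cases hab.symm with ⟨i, hij, rfl⟩ | ⟨k, rfl⟩ | rfl
  · exact ⟨i, hij, hfb⟩
  · exact absurd (hfb.symm.trans (map_hyp_eq_one hf hl h0 h4 k)) (by decide)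
  · exact absurd (hfb.symm.trans (map_w_eq_five hf h0 h4)) (by decide)

theorem isTwoColouring_of_map_copy_eq_zero (hn : 2 ≤ n)
    (hf : IsContractionMap (GQS' S) (cycleGraph 6) f) (hl : S l = Set.univ)
    (h0 : f (.copy l) = 0) (h4 : f .x = 4) :
    IsTwoColouring S {i | f (.elt i) = 1} {i | f (.elt i) = 0} := by
  refine ⟨Set.eq_univ_of_forall fun i => (map_elt_eq_zero_or_one hf hl h0 h4 i).symm,
    Set.disjoint_left.mpr fun i h₁ h₀ => absurd (h₁.symm.trans h₀) (by decide), fun j => ⟨?_, ?_⟩⟩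
  · obtain ⟨i, hij, hi⟩ := exists_mem_map_elt_eq_one hn hf hl h0 h4 j
    exact ⟨i, hi, hij⟩
  · obtain ⟨i, hij, hi⟩ := exists_mem_map_elt_eq_zero hn hf hl h0 h4 j
    exact ⟨i, hi, hij⟩

theorem exists_isTwoColouring (hn : 2 ≤ n) (hf : IsContractionMap (GQS' S) (cycleGraph 6) f)
    (hl : S l = Set.univ) : ∃ Q₁ Q₂, IsTwoColouring S Q₁ Q₂ := by
  rcases map_x hf hl with hx | hx
  · refine ⟨_, _, isTwoColouring_of_map_copy_eq_zero hn
      (hf.iso_comp (cycleGraphSubLeft (f (.copy l)))) hl ?_ ?_⟩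
    · simp [cycleGraphSubLeft]
    · simp only [cycleGraphSubLeft, Function.comp_apply, RelIso.coe_fn_mk, Equiv.subLeft_apply, hx,
        sub_add_cancel_left]
      decide
  · refine ⟨_, _, isTwoColouring_of_map_copy_eq_zero hn
      (hf.iso_comp (cycleGraphSubRight (f (.copy l)))) hl ?_ ?_⟩
    · simp [cycleGraphSubRight]
    · simp [cycleGraphSubRight, hx]

end GQS'

theorem stmt_19 {m n : ℕ} (S : Fin n → Set (Fin m)) (hn : 2 ≤ n)
    (hSlast : S ⟨n - 1, by omega⟩ = Set.univ) :
    (∃ Q₁ Q₂ : Set (Fin m), IsTwoColouring S Q₁ Q₂) ↔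
      ContainsAsContraction (GQS' S) (SimpleGraph.cycleGraph 6) := by
  rw [containsAsContraction_iff_exists_isContractionMap]
  constructor
  · rintro ⟨Q₁, Q₂, hQ⟩
    exact ⟨_, isContractionMap_colourBag hSlast hQ.compl⟩
  · rintro ⟨f, hf⟩
    exact GQS'.exists_isTwoColouring hn hf hSlast
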